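/- arXiv:hep-th/9903055 — 3 statements merged into one kernel-verified Lean document; each statement's English description precedes it below -/
import Mathlib

section
/- The image of the linear map L : ℝ^18 → ℝ^33 equals the solution set V of the 15 gauge-invariance equations; that is, a vector (a1,…,a12,b1,…,b21) ∈ ℝ^33 satisfies all 15 equations if and only if it lies in the image of L. -/
noncomputable section

/-- The 15 first-order gauge-invariance equations on `x = (a1,…,a12,b1,…,b21) ∈ ℝ^33`,
where `a k` is `x (k-1)` and `b j` is `x (j+11)`. -/
def gaugeEqs (x : Fin 33 → ℝ) : Prop :=
    (x 6 - 2 * x 7 - x 8 + x 11 - x 27 + x 28 - x 29 = 0) ∧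
    (-2 * x 7 - x 8 - x 9 + x 10 + x 11 + x 25 - x 26 + x 28 - x 29 + x 31 = 0) ∧
    (-2 * x 7 - x 8 - x 9 + x 10 + x 11 + x 25 + x 28 + x 31 - x 32 = 0) ∧
    (-2 * x 7 - (3/2) * x 8 - (1/2) * x 9 + x 11 + x 24 + x 28 - x 29 = 0) ∧
    (-2 * x 7 - (1/2) * x 8 - (3/2) * x 9 + x 10 + x 25 + x 28 + x 30 + x 31 - x 32 = 0) ∧
    (-x 9 + x 10 + x 25 + x 28 + x 31 - x 32 = 0) ∧
    (-x 3 - x 4 - x 8 - x 9 - x 13 + x 14 - x 15 = 0) ∧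
    (-2 * x 2 - 2 * x 5 - x 8 - x 9 - x 10 - x 11 + x 14 - 2 * x 15 + 2 * x 16 - x 17 = 0) ∧
    (x 4 - x 5 = 0) ∧
    (-x 3 + x 4 - 2 * x 5 - (1/2) * x 8 - (1/2) * x 9 - x 12 - x 15 = 0) ∧
    (-2 * x 1 - x 4 + x 5 - x 7 + x 19 + x 22 = 0) ∧
    (-2 * x 0 + 2 * x 1 - x 3 + 2 * x 4 - 3 * x 5 - x 6 + x 7 - x 19 - 2 * x 21 + x 22 - 2 * x 23 = 0) ∧
    (x 4 - x 5 - x 20 - x 23 = 0) ∧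
    (-(1/2) * x 3 + (3/2) * x 4 - 2 * x 5 + x 18 - x 19 - x 23 = 0) ∧
    (-2 * x 1 + x 4 - x 5 - x 7 - x 19 - x 22 = 0)

/-- The linear map `L : ℝ^18 → ℝ^33` sending
`(a6, a12, b3, b4, b5, b6, b7, b10, b11, b12, b13, b14, b16, b17, b18, b19, b20, b21)`
to `(a1,…,a12,b1,…,b21)` as in the paper. -/
def Lmap (y : Fin 18 → ℝ) : Fin 33 → ℝ :=
  ![-y 6 - y 7 - (1/2) * y 12 + (1/2) * y 13 - (1/2) * y 14,
    (1/4) * y 10 + (1/4) * y 13 - (1/4) * y 14 - (1/4) * y 15,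
    -y 0 + (1/2) * y 2 - y 3 + y 4 - (1/2) * y 5 - (3/2) * y 10 + (1/2) * y 11 - y 13 + (3/2) * y 14 - (1/2) * y 15 + (1/2) * y 16 - (1/2) * y 17,
    -y 0 + 2 * y 6 + 2 * y 8 - 2 * y 9,
    y 0,
    y 0,
    y 12 - y 13 + y 14,
    -(1/2) * y 10 - (1/2) * y 13 + (1/2) * y 14 + (1/2) * y 15,
    y 1 + y 10 + y 13 - y 14 - y 15,
    -y 1 + y 10 + y 13 - y 14 + y 15,
    -y 1 + y 10 - y 11 - y 14 + y 15 - y 16 + y 17,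
    y 1,
    -y 3 - 2 * y 6 - 2 * y 8 + 2 * y 9 - y 10 - y 13 + y 14,
    y 2 - y 3 - 2 * y 6 - 2 * y 8 + 2 * y 9 - 2 * y 10 - 2 * y 13 + 2 * y 14,
    y 2,
    y 3,
    y 4,
    y 5,
    y 6,
    -y 8,
    -y 9,
    y 7,
    y 8,
    y 9,
    y 10,
    y 11,
    -y 14 + y 17,
    y 12,
    y 13,
    y 14,
    y 15,
    y 16,
    y 17]

theorem Lmap_0 (y : Fin 18 → ℝ) : Lmap y 0 = -y 6 - y 7 - (1/2) * y 12 + (1/2) * y 13 - (1/2) * y 14 := rfl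
theorem Lmap_1 (y : Fin 18 → ℝ) : Lmap y 1 = (1/4) * y 10 + (1/4) * y 13 - (1/4) * y 14 - (1/4) * y 15 := rfl
theorem Lmap_2 (y : Fin 18 → ℝ) : Lmap y 2 = -y 0 + (1/2) * y 2 - y 3 + y 4 - (1/2) * y 5 - (3/2) * y 10 + (1/2) * y 11 - y 13 + (3/2) * y 14 - (1/2) * y 15 + (1/2) * y 16 - (1/2) * y 17 := rfl
theorem Lmap_3 (y : Fin 18 → ℝ) : Lmap y 3 = -y 0 + 2 * y 6 + 2 * y 8 - 2 * y 9 := rfl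
theorem Lmap_4 (y : Fin 18 → ℝ) : Lmap y 4 = y 0 := rfl
theorem Lmap_5 (y : Fin 18 → ℝ) : Lmap y 5 = y 0 := rfl
theorem Lmap_6 (y : Fin 18 → ℝ) : Lmap y 6 = y 12 - y 13 + y 14 := rfl
theorem Lmap_7 (y : Fin 18 → ℝ) : Lmap y 7 = -(1/2) * y 10 - (1/2) * y 13 + (1/2) * y 14 + (1/2) * y 15 := rfl
theorem Lmap_8 (y : Fin 18 → ℝ) : Lmap y 8 = y 1 + y 10 + y 13 - y 14 - y 15 := rfl
theorem Lmap_9 (y : Fin 18 → ℝ) : Lmap y 9 = -y 1 + y 10 + y 13 - y 14 + y 15 := rfl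
theorem Lmap_10 (y : Fin 18 → ℝ) : Lmap y 10 = -y 1 + y 10 - y 11 - y 14 + y 15 - y 16 + y 17 := rfl
theorem Lmap_11 (y : Fin 18 → ℝ) : Lmap y 11 = y 1 := rfl
theorem Lmap_12 (y : Fin 18 → ℝ) : Lmap y 12 = -y 3 - 2 * y 6 - 2 * y 8 + 2 * y 9 - y 10 - y 13 + y 14 := rfl
theorem Lmap_13 (y : Fin 18 → ℝ) : Lmap y 13 = y 2 - y 3 - 2 * y 6 - 2 * y 8 + 2 * y 9 - 2 * y 10 - 2 * y 13 + 2 * y 14 := rfl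
theorem Lmap_14 (y : Fin 18 → ℝ) : Lmap y 14 = y 2 := rfl
theorem Lmap_15 (y : Fin 18 → ℝ) : Lmap y 15 = y 3 := rfl
theorem Lmap_16 (y : Fin 18 → ℝ) : Lmap y 16 = y 4 := rfl
theorem Lmap_17 (y : Fin 18 → ℝ) : Lmap y 17 = y 5 := rfl
theorem Lmap_18 (y : Fin 18 → ℝ) : Lmap y 18 = y 6 := rfl
theorem Lmap_19 (y : Fin 18 → ℝ) : Lmap y 19 = -y 8 := rfl
theorem Lmap_20 (y : Fin 18 → ℝ) : Lmap y 20 = -y 9 := rfl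
theorem Lmap_21 (y : Fin 18 → ℝ) : Lmap y 21 = y 7 := rfl
theorem Lmap_22 (y : Fin 18 → ℝ) : Lmap y 22 = y 8 := rfl
theorem Lmap_23 (y : Fin 18 → ℝ) : Lmap y 23 = y 9 := rfl
theorem Lmap_24 (y : Fin 18 → ℝ) : Lmap y 24 = y 10 := rfl
theorem Lmap_25 (y : Fin 18 → ℝ) : Lmap y 25 = y 11 := rfl
theorem Lmap_26 (y : Fin 18 → ℝ) : Lmap y 26 = -y 14 + y 17 := rfl
theorem Lmap_27 (y : Fin 18 → ℝ) : Lmap y 27 = y 12 := rfl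
theorem Lmap_28 (y : Fin 18 → ℝ) : Lmap y 28 = y 13 := rfl
theorem Lmap_29 (y : Fin 18 → ℝ) : Lmap y 29 = y 14 := rfl
theorem Lmap_30 (y : Fin 18 → ℝ) : Lmap y 30 = y 15 := rfl
theorem Lmap_31 (y : Fin 18 → ℝ) : Lmap y 31 = y 16 := rfl
theorem Lmap_32 (y : Fin 18 → ℝ) : Lmap y 32 = y 17 := rfl

set_option maxHeartbeats 1600000 in
/-- A vector `x ∈ ℝ^33` satisfies all 15 gauge-invariance equations
if and only if it lies in the image of `L`. -/
theorem image_of_L_eq_solution_set :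
    ∀ x : Fin 33 → ℝ, gaugeEqs x ↔ x ∈ Set.range Lmap := by
  intro x
  constructor
  · unfold gaugeEqs
    rintro ⟨h1, h2, h3, h4, h5, h6, h7, h8, h9, h10, h11, h12, h13, h14, h15⟩
    set w : Fin 18 → ℝ := ![x 4, x 11, x 14, x 15, x 16, x 17, x 18, x 21, x 22, x 23, x 24,
      x 25, x 27, x 28, x 29, x 30, x 31, x 32] with hw
    have hw0 : w 0 = x 4 := rfl
    have hw1 : w 1 = x 11 := rfl
    have hw2 : w 2 = x 14 := rfl
    have hw3 : w 3 = x 15 := rfl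
    have hw4 : w 4 = x 16 := rfl
    have hw5 : w 5 = x 17 := rfl
    have hw6 : w 6 = x 18 := rfl
    have hw7 : w 7 = x 21 := rfl
    have hw8 : w 8 = x 22 := rfl
    have hw9 : w 9 = x 23 := rfl
    have hw10 : w 10 = x 24 := rfl
    have hw11 : w 11 = x 25 := rfl
    have hw12 : w 12 = x 27 := rfl
    have hw13 : w 13 = x 28 := rfl
    have hw14 : w 14 = x 29 := rfl
    have hw15 : w 15 = x 30 := rfl
    have hw16 : w 16 = x 31 := rfl
    have hw17 : w 17 = x 32 := rfl
    refine ⟨w, ?_⟩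
    funext i
    fin_cases i
    · show Lmap w 0 = x 0
      simp only [Lmap_0, hw0, hw1, hw2, hw3, hw4, hw5, hw6, hw7, hw8, hw9, hw10, hw11, hw12, hw13, hw14, hw15, hw16, hw17]
      try linarith
    · show Lmap w 1 = x 1
      simp only [Lmap_1, hw0, hw1, hw2, hw3, hw4, hw5, hw6, hw7, hw8, hw9, hw10, hw11, hw12, hw13, hw14, hw15, hw16, hw17]
      try linarith
    · show Lmap w 2 = x 2
      simp only [Lmap_2, hw0, hw1, hw2, hw3, hw4, hw5, hw6, hw7, hw8, hw9, hw10, hw11, hw12, hw13, hw14, hw15, hw16, hw17]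
      try linarith
    · show Lmap w 3 = x 3
      simp only [Lmap_3, hw0, hw1, hw2, hw3, hw4, hw5, hw6, hw7, hw8, hw9, hw10, hw11, hw12, hw13, hw14, hw15, hw16, hw17]
      try linarith
    · show Lmap w 4 = x 4
      simp only [Lmap_4, hw0, hw1, hw2, hw3, hw4, hw5, hw6, hw7, hw8, hw9, hw10, hw11, hw12, hw13, hw14, hw15, hw16, hw17]
      try linarith
    · show Lmap w 5 = x 5
      simp only [Lmap_5, hw0, hw1, hw2, hw3, hw4, hw5, hw6, hw7, hw8, hw9, hw10, hw11, hw12, hw13, hw14, hw15, hw16, hw17]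
      try linarith
    · show Lmap w 6 = x 6
      simp only [Lmap_6, hw0, hw1, hw2, hw3, hw4, hw5, hw6, hw7, hw8, hw9, hw10, hw11, hw12, hw13, hw14, hw15, hw16, hw17]
      try linarith
    · show Lmap w 7 = x 7
      simp only [Lmap_7, hw0, hw1, hw2, hw3, hw4, hw5, hw6, hw7, hw8, hw9, hw10, hw11, hw12, hw13, hw14, hw15, hw16, hw17]
      try linarith
    · show Lmap w 8 = x 8
      simp only [Lmap_8, hw0, hw1, hw2, hw3, hw4, hw5, hw6, hw7, hw8, hw9, hw10, hw11, hw12, hw13, hw14, hw15, hw16, hw17]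
      try linarith
    · show Lmap w 9 = x 9
      simp only [Lmap_9, hw0, hw1, hw2, hw3, hw4, hw5, hw6, hw7, hw8, hw9, hw10, hw11, hw12, hw13, hw14, hw15, hw16, hw17]
      try linarith
    · show Lmap w 10 = x 10
      simp only [Lmap_10, hw0, hw1, hw2, hw3, hw4, hw5, hw6, hw7, hw8, hw9, hw10, hw11, hw12, hw13, hw14, hw15, hw16, hw17]
      try linarith
    · show Lmap w 11 = x 11
      simp only [Lmap_11, hw0, hw1, hw2, hw3, hw4, hw5, hw6, hw7, hw8, hw9, hw10, hw11, hw12, hw13, hw14, hw15, hw16, hw17]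
      try linarith
    · show Lmap w 12 = x 12
      simp only [Lmap_12, hw0, hw1, hw2, hw3, hw4, hw5, hw6, hw7, hw8, hw9, hw10, hw11, hw12, hw13, hw14, hw15, hw16, hw17]
      try linarith
    · show Lmap w 13 = x 13
      simp only [Lmap_13, hw0, hw1, hw2, hw3, hw4, hw5, hw6, hw7, hw8, hw9, hw10, hw11, hw12, hw13, hw14, hw15, hw16, hw17]
      try linarith
    · show Lmap w 14 = x 14
      simp only [Lmap_14, hw0, hw1, hw2, hw3, hw4, hw5, hw6, hw7, hw8, hw9, hw10, hw11, hw12, hw13, hw14, hw15, hw16, hw17]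
      try linarith
    · show Lmap w 15 = x 15
      simp only [Lmap_15, hw0, hw1, hw2, hw3, hw4, hw5, hw6, hw7, hw8, hw9, hw10, hw11, hw12, hw13, hw14, hw15, hw16, hw17]
      try linarith
    · show Lmap w 16 = x 16
      simp only [Lmap_16, hw0, hw1, hw2, hw3, hw4, hw5, hw6, hw7, hw8, hw9, hw10, hw11, hw12, hw13, hw14, hw15, hw16, hw17]
      try linarith
    · show Lmap w 17 = x 17
      simp only [Lmap_17, hw0, hw1, hw2, hw3, hw4, hw5, hw6, hw7, hw8, hw9, hw10, hw11, hw12, hw13, hw14, hw15, hw16, hw17]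
      try linarith
    · show Lmap w 18 = x 18
      simp only [Lmap_18, hw0, hw1, hw2, hw3, hw4, hw5, hw6, hw7, hw8, hw9, hw10, hw11, hw12, hw13, hw14, hw15, hw16, hw17]
      try linarith
    · show Lmap w 19 = x 19
      simp only [Lmap_19, hw0, hw1, hw2, hw3, hw4, hw5, hw6, hw7, hw8, hw9, hw10, hw11, hw12, hw13, hw14, hw15, hw16, hw17]
      try linarith
    · show Lmap w 20 = x 20
      simp only [Lmap_20, hw0, hw1, hw2, hw3, hw4, hw5, hw6, hw7, hw8, hw9, hw10, hw11, hw12, hw13, hw14, hw15, hw16, hw17]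
      try linarith
    · show Lmap w 21 = x 21
      simp only [Lmap_21, hw0, hw1, hw2, hw3, hw4, hw5, hw6, hw7, hw8, hw9, hw10, hw11, hw12, hw13, hw14, hw15, hw16, hw17]
      try linarith
    · show Lmap w 22 = x 22
      simp only [Lmap_22, hw0, hw1, hw2, hw3, hw4, hw5, hw6, hw7, hw8, hw9, hw10, hw11, hw12, hw13, hw14, hw15, hw16, hw17]
      try linarith
    · show Lmap w 23 = x 23
      simp only [Lmap_23, hw0, hw1, hw2, hw3, hw4, hw5, hw6, hw7, hw8, hw9, hw10, hw11, hw12, hw13, hw14, hw15, hw16, hw17]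
      try linarith
    · show Lmap w 24 = x 24
      simp only [Lmap_24, hw0, hw1, hw2, hw3, hw4, hw5, hw6, hw7, hw8, hw9, hw10, hw11, hw12, hw13, hw14, hw15, hw16, hw17]
      try linarith
    · show Lmap w 25 = x 25
      simp only [Lmap_25, hw0, hw1, hw2, hw3, hw4, hw5, hw6, hw7, hw8, hw9, hw10, hw11, hw12, hw13, hw14, hw15, hw16, hw17]
      try linarith
    · show Lmap w 26 = x 26
      simp only [Lmap_26, hw0, hw1, hw2, hw3, hw4, hw5, hw6, hw7, hw8, hw9, hw10, hw11, hw12, hw13, hw14, hw15, hw16, hw17]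
      try linarith
    · show Lmap w 27 = x 27
      simp only [Lmap_27, hw0, hw1, hw2, hw3, hw4, hw5, hw6, hw7, hw8, hw9, hw10, hw11, hw12, hw13, hw14, hw15, hw16, hw17]
      try linarith
    · show Lmap w 28 = x 28
      simp only [Lmap_28, hw0, hw1, hw2, hw3, hw4, hw5, hw6, hw7, hw8, hw9, hw10, hw11, hw12, hw13, hw14, hw15, hw16, hw17]
      try linarith
    · show Lmap w 29 = x 29
      simp only [Lmap_29, hw0, hw1, hw2, hw3, hw4, hw5, hw6, hw7, hw8, hw9, hw10, hw11, hw12, hw13, hw14, hw15, hw16, hw17]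
      try linarith
    · show Lmap w 30 = x 30
      simp only [Lmap_30, hw0, hw1, hw2, hw3, hw4, hw5, hw6, hw7, hw8, hw9, hw10, hw11, hw12, hw13, hw14, hw15, hw16, hw17]
      try linarith
    · show Lmap w 31 = x 31
      simp only [Lmap_31, hw0, hw1, hw2, hw3, hw4, hw5, hw6, hw7, hw8, hw9, hw10, hw11, hw12, hw13, hw14, hw15, hw16, hw17]
      try linarith
    · show Lmap w 32 = x 32
      simp only [Lmap_32, hw0, hw1, hw2, hw3, hw4, hw5, hw6, hw7, hw8, hw9, hw10, hw11, hw12, hw13, hw14, hw15, hw16, hw17]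
      try linarith
  · rintro ⟨y, rfl⟩
    unfold gaugeEqs
    refine ⟨?_, ?_, ?_, ?_, ?_, ?_, ?_, ?_, ?_, ?_, ?_, ?_, ?_, ?_, ?_⟩ <;>
      simp only [Lmap_0, Lmap_1, Lmap_2, Lmap_3, Lmap_4, Lmap_5, Lmap_6, Lmap_7, Lmap_8, Lmap_9, Lmap_10, Lmap_11, Lmap_12, Lmap_13, Lmap_14, Lmap_15, Lmap_16, Lmap_17, Lmap_18, Lmap_19, Lmap_20, Lmap_21, Lmap_22, Lmap_23, Lmap_24, Lmap_25, Lmap_26, Lmap_27, Lmap_28, Lmap_29, Lmap_30, Lmap_31, Lmap_32] <;> ring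
end
end

section
/- The linear map M_E : ℝ^15 → ℝ^18 defined below has rank exactly 12. -/
/-!
The twelve rows `d29, …, d39, d41` form a basis of the row space of `M_E`. The other six rows
are integer combinations of them (`ME.rowCoeffs`), so the rank is at most 12; their minor on the
columns `c39, …, c42, c45, …, c52` is unimodular (`ME.minorInv` is its inverse), so the rank is
at least 12. Both certificates are identities between integer matrices, hence survive the cast
to `ℝ`.
-/

noncomputable section

/-- The coefficient matrix `M_E` of the type-E divergence system:
rows are `d29,…,d46`, columns are `c39,…,c53`. -/
def ME : Matrix (Fin 18) (Fin 15) ℝ :=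
  !![0, 0, 0, 1, 0, 0, 0, 0, 0, 1, 0, 0, 0, 0, 0;
    0, 1, 0, 1, 0, 0, 0, 0, 0, 0, 0, 0, 1, 0, 0;
    0, 0, 0, 1, 0, 0, 0, 0, 1, 0, 0, 0, 0, 1, 0;
    0, 0, 0, 0, 1, 0, 0, 0, 0, 1, 0, 0, 0, 0, 0;
    0, 0, 0, 0, 1, 1, 0, 0, 0, 0, 0, 0, 1, 0, 0;
    0, 0, 1, 0, 1, 0, 0, 0, 0, 0, 0, 0, 0, 1, 0;
    0, 0, 0, 0, 0, 1, 0, 0, 0, 0, 1, 0, 0, 0, 0;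
    0, 0, 1, 0, 0, 1, 0, 0, 0, 0, 0, 0, 0, 0, 1;
    1, 0, 0, 0, 0, 0, 1, 0, 0, 0, 0, 0, 1, 0, 0;
    0, 0, 0, 0, 0, 0, 1, 0, 0, 0, 1, 0, 0, 0, 0;
    0, 0, 0, 0, 0, 0, 1, 1, 0, 0, 0, 0, 0, 0, 1;
    1, 0, 0, 0, 0, 0, 0, 1, 0, 0, 0, 0, 0, 1, 0;
    0, 0, 0, 0, 0, 0, 0, 1, 0, 0, 0, 1, 0, 0, 0;
    0, 1, 0, 0, 0, 0, 0, 0, 1, 0, 0, 0, 0, 0, 1;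
    0, 0, 0, 0, 0, 0, 0, 0, 1, 0, 0, 1, 0, 0, 0;
    1, 0, 0, 0, 0, 0, 0, 0, 0, 1, 0, 0, 0, 0, 0;
    0, 1, 0, 0, 0, 0, 0, 0, 0, 0, 1, 0, 0, 0, 0;
    0, 0, 1, 0, 0, 0, 0, 0, 0, 0, 0, 1, 0, 0, 0]

namespace Matrix

variable {R : Type*} [CommSemiring R] [StrongRankCondition R] {m n r : Type*}
  [Fintype n] [Fintype r]

theorem rank_le_card_of_eq_mul {A : Matrix m n R} (P : Matrix m r R) (B : Matrix r n R)
    (h : A = P * B) : A.rank ≤ Fintype.card r :=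
  calc A.rank = (P * B).rank := by rw [h]
    _ ≤ B.rank := rank_mul_le_right P B
    _ ≤ Fintype.card r := rank_le_card_height B

theorem card_le_rank_of_submatrix_mul_eq_one [DecidableEq r] {A : Matrix m n R} (f : r → m)
    (g : r → n) (N : Matrix r r R) (h : A.submatrix f g * N = 1) :
    Fintype.card r ≤ A.rank :=
  calc Fintype.card r = (1 : Matrix r r R).rank := rank_one.symm
    _ = (A.submatrix f g * N).rank := by rw [h]
    _ ≤ (A.submatrix f g).rank := rank_mul_le_left _ N
    _ ≤ A.rank := rank_submatrix_le A f g

theorem rank_map_eq_card {S : Type*} [Semiring S] [DecidableEq r] (φ : S →+* R)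
    (A : Matrix m n S) (f : r → m) (g : r → n) (P : Matrix m r S) (N : Matrix r r S)
    (hP : A = P * A.submatrix f id) (hN : A.submatrix f g * N = 1) :
    (A.map φ).rank = Fintype.card r :=
  le_antisymm
    (rank_le_card_of_eq_mul (P.map φ) ((A.submatrix f id).map φ)
      (by rw [← Matrix.map_mul, ← hP]))
    (card_le_rank_of_submatrix_mul_eq_one f g (N.map φ)
      (by rw [submatrix_map, ← Matrix.map_mul, hN, Matrix.map_one φ (map_zero φ) (map_one φ)]))

end Matrix

namespace ME

def intMatrix : Matrix (Fin 18) (Fin 15) ℤ :=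
  !![0, 0, 0, 1, 0, 0, 0, 0, 0, 1, 0, 0, 0, 0, 0;
    0, 1, 0, 1, 0, 0, 0, 0, 0, 0, 0, 0, 1, 0, 0;
    0, 0, 0, 1, 0, 0, 0, 0, 1, 0, 0, 0, 0, 1, 0;
    0, 0, 0, 0, 1, 0, 0, 0, 0, 1, 0, 0, 0, 0, 0;
    0, 0, 0, 0, 1, 1, 0, 0, 0, 0, 0, 0, 1, 0, 0;
    0, 0, 1, 0, 1, 0, 0, 0, 0, 0, 0, 0, 0, 1, 0;
    0, 0, 0, 0, 0, 1, 0, 0, 0, 0, 1, 0, 0, 0, 0;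
    0, 0, 1, 0, 0, 1, 0, 0, 0, 0, 0, 0, 0, 0, 1;
    1, 0, 0, 0, 0, 0, 1, 0, 0, 0, 0, 0, 1, 0, 0;
    0, 0, 0, 0, 0, 0, 1, 0, 0, 0, 1, 0, 0, 0, 0;
    0, 0, 0, 0, 0, 0, 1, 1, 0, 0, 0, 0, 0, 0, 1;
    1, 0, 0, 0, 0, 0, 0, 1, 0, 0, 0, 0, 0, 1, 0;
    0, 0, 0, 0, 0, 0, 0, 1, 0, 0, 0, 1, 0, 0, 0;
    0, 1, 0, 0, 0, 0, 0, 0, 1, 0, 0, 0, 0, 0, 1;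
    0, 0, 0, 0, 0, 0, 0, 0, 1, 0, 0, 1, 0, 0, 0;
    1, 0, 0, 0, 0, 0, 0, 0, 0, 1, 0, 0, 0, 0, 0;
    0, 1, 0, 0, 0, 0, 0, 0, 0, 0, 1, 0, 0, 0, 0;
    0, 0, 1, 0, 0, 0, 0, 0, 0, 0, 0, 1, 0, 0, 0]

theorem intMatrix_map : intMatrix.map (Int.castRingHom ℝ) = ME := by
  simp [ME, intMatrix, ← Matrix.ext_iff, Fin.forall_fin_succ]

def basisRows : Fin 12 → Fin 18 := ![0, 1, 2, 3, 4, 5, 6, 7, 8, 9, 10, 12]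

def minorCols : Fin 12 → Fin 15 := ![0, 1, 2, 3, 6, 7, 8, 9, 10, 11, 12, 13]

def rowCoeffs : Matrix (Fin 18) (Fin 12) ℤ :=
  !![1, 0, 0, 0, 0, 0, 0, 0, 0, 0, 0, 0;
    0, 1, 0, 0, 0, 0, 0, 0, 0, 0, 0, 0;
    0, 0, 1, 0, 0, 0, 0, 0, 0, 0, 0, 0;
    0, 0, 0, 1, 0, 0, 0, 0, 0, 0, 0, 0;
    0, 0, 0, 0, 1, 0, 0, 0, 0, 0, 0, 0;
    0, 0, 0, 0, 0, 1, 0, 0, 0, 0, 0, 0;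
    0, 0, 0, 0, 0, 0, 1, 0, 0, 0, 0, 0;
    0, 0, 0, 0, 0, 0, 0, 1, 0, 0, 0, 0;
    0, 0, 0, 0, 0, 0, 0, 0, 1, 0, 0, 0;
    0, 0, 0, 0, 0, 0, 0, 0, 0, 1, 0, 0;
    0, 0, 0, 0, 0, 0, 0, 0, 0, 0, 1, 0;
    0, 0, 0, 0, -1, 1, 2, -1, 1, -2, 1, 0;
    0, 0, 0, 0, 0, 0, 0, 0, 0, 0, 0, 1;
    -2, 1, 1, 2, -1, -1, 0, 1, 0, 0, 0, 0;
    -1, 0, 1, 1, 0, -1, -1, 1, 0, 1, -1, 1;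
    0, 0, 0, 1, -1, 0, 1, 0, 1, -1, 0, 0;
    -1, 1, 0, 1, -1, 0, 1, 0, 0, 0, 0, 0;
    0, 0, 0, 0, 0, 0, -1, 1, 0, 1, -1, 1]

def minorInv : Matrix (Fin 12) (Fin 12) ℤ :=
  !![0, 0, 0, 0, -1, 0, 1, 0, 1, -1, 0, 0;
    -1, 1, 0, 1, -1, 0, 0, 0, 0, 0, 0, 0;
    0, 0, 0, 0, 0, 0, 0, 1, 0, 0, 0, 0;
    1, 0, 0, -1, 0, 0, 0, 0, 0, 0, 0, 0;
    0, 0, 0, 0, 0, 0, -1, 0, 0, 1, 0, 0;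
    0, 0, 0, 0, 0, 0, 1, 0, 0, -1, 1, 0;
    -1, 0, 1, 1, 0, -1, 0, 1, 0, 0, 0, 0;
    0, 0, 0, 1, 0, 0, 0, 0, 0, 0, 0, 0;
    0, 0, 0, 0, 0, 0, 1, 0, 0, 0, 0, 0;
    0, 0, 0, 0, 0, 0, -1, 0, 0, 1, -1, 1;
    0, 0, 0, 0, 1, 0, 0, 0, 0, 0, 0, 0;
    0, 0, 0, 0, 0, 1, 0, -1, 0, 0, 0, 0]

theorem intMatrix_eq_rowCoeffs_mul : intMatrix = rowCoeffs * intMatrix.submatrix basisRows id := by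
  decide

theorem intMatrix_minor_mul_minorInv :
    intMatrix.submatrix basisRows minorCols * minorInv = 1 := by
  decide

end ME

/-- The linear map `M_E : ℝ^15 → ℝ^18` has rank exactly 12. -/
theorem ME_rank_eq_12 : ME.rank = 12 := by
  rw [← ME.intMatrix_map, Matrix.rank_map_eq_card (Int.castRingHom ℝ) ME.intMatrix ME.basisRows
    ME.minorCols ME.rowCoeffs ME.minorInv ME.intMatrix_eq_rowCoeffs_mul
    ME.intMatrix_minor_mul_minorInv, Fintype.card_fin]
end
end

section
/- A vector (d29,…,d46) ∈ ℝ^18 lies in the range of the linear map M_E if and only if the following six linear relations hold: (i) d32+d36−d33−d46−d44−d39+d37+d41 = 0; (ii) d32+d36−d33−2d44+d40−d39+d37−d31+d29+d43−d46 = 0; (iii) d32−d33−2d44+d40−d39+d37+d35−d31+d29+d42−d45 = 0; (iv) d36+2d32−d33−2d44+d40−d39+d37−d34 = 0; (v) d42+2d29−d30+d40−2d44−d39+d37−d31 = 0; (vi) d38+d40−d39−d44−d31+d29+d42−d45 = 0. -/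
noncomputable section

lemma ME_mulVec (c : Fin 15 → ℝ) :
    ME.mulVec c =
      ![c 3 + c 9, c 1 + c 3 + c 12, c 3 + c 8 + c 13, c 4 + c 9, c 4 + c 5 + c 12,
        c 2 + c 4 + c 13, c 5 + c 10, c 2 + c 5 + c 14, c 0 + c 6 + c 12, c 6 + c 10,
        c 6 + c 7 + c 14, c 0 + c 7 + c 13, c 7 + c 11, c 1 + c 8 + c 14, c 8 + c 11,
        c 0 + c 9, c 1 + c 10, c 2 + c 11] := by
  ext i
  fin_cases i <;> simp [ME, Matrix.mulVec, dotProduct, Fin.sum_univ_succ] <;> ring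

-- Relations (i)–(vi), with `d29,…,d46` indexed from `0`.
def MERelations (d : Fin 18 → ℝ) : Prop :=
  d 3 + d 7 - d 4 - d 17 - d 15 - d 10 + d 8 + d 12 = 0 ∧
  d 3 + d 7 - d 4 - 2 * d 15 + d 11 - d 10 + d 8 - d 2 + d 0 + d 14 - d 17 = 0 ∧
  d 3 - d 4 - 2 * d 15 + d 11 - d 10 + d 8 + d 6 - d 2 + d 0 + d 13 - d 16 = 0 ∧
  d 7 + 2 * d 3 - d 4 - 2 * d 15 + d 11 - d 10 + d 8 - d 5 = 0 ∧
  d 13 + 2 * d 0 - d 1 + d 11 - 2 * d 15 - d 10 + d 8 - d 2 = 0 ∧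
  d 9 + d 11 - d 10 - d 15 - d 2 + d 0 + d 13 - d 16 = 0

lemma MERelations_mulVec (c : Fin 15 → ℝ) : MERelations (ME.mulVec c) := by
  simp only [MERelations, ME_mulVec, Matrix.cons_val]
  refine ⟨?_, ?_, ?_, ?_, ?_, ?_⟩ <;> ring

/- `M_E` has rank 12 and its first twelve columns already span its range, so a preimage
can be taken with `c51 = c52 = c53 = 0`. -/
def MEPreimage (d : Fin 18 → ℝ) : Fin 15 → ℝ :=
  ![-d 4 / 2 + d 5 / 2 + d 6 - d 7 / 2 + d 8 - d 9,
    -d 0 + d 1 + d 3 - d 4 / 2 - d 5 / 2 + d 7 / 2,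
    -d 4 / 2 + d 5 / 2 + d 7 / 2,
    d 0 - d 3 + d 4 / 2 + d 5 / 2 - d 7 / 2,
    d 4 / 2 + d 5 / 2 - d 7 / 2,
    d 4 / 2 - d 5 / 2 + d 7 / 2,
    d 4 / 2 - d 5 / 2 - d 6 + d 7 / 2 + d 9,
    -d 4 / 2 + d 5 / 2 + d 6 - d 7 / 2 - d 9 + d 10,
    -d 0 + d 2 + d 3 - d 4 / 2 - d 5 / 2 + d 7 / 2,
    d 3 - d 4 / 2 - d 5 / 2 + d 7 / 2,
    -d 4 / 2 + d 5 / 2 + d 6 - d 7 / 2,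
    d 4 / 2 - d 5 / 2 - d 6 + d 7 / 2 + d 9 - d 10 + d 12,
    0, 0, 0]

lemma ME_mulVec_MEPreimage {d : Fin 18 → ℝ} (hd : MERelations d) :
    ME.mulVec (MEPreimage d) = d := by
  obtain ⟨h1, h2, h3, h4, h5, h6⟩ := hd
  ext i
  fin_cases i <;> simp [ME_mulVec, MEPreimage] <;> linarith

/-- A vector `d = (d29,…,d46) ∈ ℝ^18` lies in the range of `M_E` if and only if
the six linear relations (i)–(vi) hold. -/
theorem ME_range_iff :
    ∀ d : Fin 18 → ℝ,
      d ∈ Set.range ME.mulVec ↔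
        (d 3 + d 7 - d 4 - d 17 - d 15 - d 10 + d 8 + d 12 = 0 ∧
         d 3 + d 7 - d 4 - 2 * d 15 + d 11 - d 10 + d 8 - d 2 + d 0 + d 14 - d 17 = 0 ∧
         d 3 - d 4 - 2 * d 15 + d 11 - d 10 + d 8 + d 6 - d 2 + d 0 + d 13 - d 16 = 0 ∧
         d 7 + 2 * d 3 - d 4 - 2 * d 15 + d 11 - d 10 + d 8 - d 5 = 0 ∧
         d 13 + 2 * d 0 - d 1 + d 11 - 2 * d 15 - d 10 + d 8 - d 2 = 0 ∧
         d 9 + d 11 - d 10 - d 15 - d 2 + d 0 + d 13 - d 16 = 0) := by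
  intro d
  show d ∈ Set.range ME.mulVec ↔ MERelations d
  constructor
  · rintro ⟨c, rfl⟩
    exact MERelations_mulVec c
  · exact fun hd => ⟨MEPreimage d, ME_mulVec_MEPreimage hd⟩
end
end
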